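/- Let p = 3 and S = {31, 37, 43, 67}. For each q_i ∈ S, let ℓ_{ij} ∈ 𝔽₃ be the image of r where q_i ≡ g_j^{−r} mod q_j and g_j is a primitive root mod q_j. Then the off-diagonal entries (ℓ_{ij})_{i≠j} of the 4×4 linking matrix yield four quadratic relators ρ_i = Σ_{j≠i} ℓ_{ij} x_{ij} (with x_{ji} = −x_{ij}) that are linearly independent in the 6-dimensional space L₂ over 𝔽₃. -/

import Mathlib

open FreeLieAlgebra

attribute [local instance] LieRing.ofAssociativeRing

/-- Auxiliary detector: a Lie algebra morphism from the free Lie algebra into `3×3`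
matrices sending `x` to `E₀₁` if `x = a`, plus `E₁₂` if `x = b`.  The `(0,2)` entry of the
image of `⁅of i, of j⁆` is `δ_{ia} δ_{jb} - δ_{ja} δ_{ib}`. -/
noncomputable def linkingDetector (a b : Fin 4) :
    FreeLieAlgebra (ZMod 3) (Fin 4) →ₗ⁅ZMod 3⁆ Matrix (Fin 3) (Fin 3) (ZMod 3) :=
  FreeLieAlgebra.lift (ZMod 3) (fun x =>
    (if x = a then Matrix.single 0 1 1 else 0) +
      (if x = b then Matrix.single 1 2 1 else 0))

/-- Extraction of antisymmetrized coefficients from a vanishing combination of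
brackets of generators in the free Lie algebra. -/
lemma linking_coeffs (ℓ : Fin 4 → Fin 4 → ZMod 3) (c : Fin 4 → ZMod 3)
    (hc : ∑ i, c i • ∑ j : Fin 4, ℓ i j •
      ⁅FreeLieAlgebra.of (ZMod 3) i, FreeLieAlgebra.of (ZMod 3) j⁆ = 0)
    (a b : Fin 4) : c a * ℓ a b - c b * ℓ b a = 0 := by
  have h0 : (linkingDetector a b).toLinearMap (∑ i, c i • ∑ j : Fin 4, ℓ i j •
      ⁅FreeLieAlgebra.of (ZMod 3) i, FreeLieAlgebra.of (ZMod 3) j⁆) = 0 := by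
    rw [hc]; simp
  simp only [map_sum, map_smul, LieHom.coe_toLinearMap, LieHom.map_lie, linkingDetector,
    FreeLieAlgebra.lift_of_apply, Ring.lie_def] at h0
  have h1 := congrArg (fun m => m 0 2) h0
  simp only [Matrix.sum_apply, Matrix.smul_apply, Matrix.sub_apply, Matrix.add_apply,
    Matrix.mul_apply, Fin.sum_univ_three, Matrix.single, Matrix.of_apply,
    Matrix.zero_apply, smul_eq_mul] at h1
  simp only [apply_ite (fun m : Matrix (Fin 3) (Fin 3) (ZMod 3) => m 0 0),
    apply_ite (fun m : Matrix (Fin 3) (Fin 3) (ZMod 3) => m 0 1),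
    apply_ite (fun m : Matrix (Fin 3) (Fin 3) (ZMod 3) => m 0 2),
    apply_ite (fun m : Matrix (Fin 3) (Fin 3) (ZMod 3) => m 1 2),
    apply_ite (fun m : Matrix (Fin 3) (Fin 3) (ZMod 3) => m 2 2),
    Matrix.of_apply, Matrix.zero_apply] at h1
  norm_num [Fin.ext_iff, mul_sub, mul_ite, Finset.sum_sub_distrib, Finset.mul_sum] at h1
  simpa only [Fin.val_inj, Finset.sum_ite_eq', Finset.mem_univ, if_true] using h1

/-- The key number-theoretic lemma: if `g` is a primitive root of order `N = 3M` and
`g ^ r * a = 1`, then `3 ∣ r` if and only if `a` is a cube, i.e. `a ^ M = 1`. -/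
lemma linking_keyNT {n : ℕ} (N M r : ℕ) (hN3 : N = 3 * M) (hM : M ≠ 0)
    (g a : ZMod n) (hg : IsPrimitiveRoot g N) (hra : g ^ r * a = 1) :
    ((r : ZMod 3) = 0) ↔ a ^ M = 1 := by
  have h1 : g ^ (r * M) * a ^ M = 1 := by
    rw [pow_mul, ← mul_pow, hra, one_pow]
  constructor
  · intro h
    obtain ⟨t, rfl⟩ := (ZMod.natCast_eq_zero_iff r 3).mp h
    have h2 : g ^ (3 * t * M) = 1 := by
      have h3 : 3 * t * M = N * t := by rw [hN3]; ring
      rw [h3, pow_mul, hg.pow_eq_one, one_pow]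
    rwa [h2, one_mul] at h1
  · intro h
    rw [h, mul_one] at h1
    have h2 := (hg.pow_eq_one_iff_dvd _).mp h1
    rw [hN3] at h2
    have h3 : 3 ∣ r := by
      rw [mul_comm 3 M, mul_comm r M] at h2
      exact (Nat.mul_dvd_mul_iff_left (Nat.pos_of_ne_zero hM)).mp h2
    exact (ZMod.natCast_eq_zero_iff r 3).mpr h3

/-- let `p = 3` and `S = {31, 37, 43, 67}` (all `≡ 1 mod 3`).  If
`g_j` is a primitive root mod `q_j` and `ℓ_{ij} ∈ 𝔽₃` (for `i ≠ j`) is the image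
of any `r` with `q_i ≡ g_j^{−r} mod q_j`, then the four quadratic relators
`ρ_i = Σ_{j≠i} ℓ_{ij} x_{ij}` (with `x_{ji} = −x_{ij}`, realized via the bracket
`⁅x_i, x_j⁆` in the free Lie algebra over `𝔽₃`) are linearly independent in the
6-dimensional space `L₂`. -/
theorem linking_relators_linearly_independent
    (q : Fin 4 → ℕ) (hq : q = ![31, 37, 43, 67])
    (g : Fin 4 → ℕ)
    (hg : ∀ j, IsPrimitiveRoot (g j : ZMod (q j)) (q j - 1))
    (ℓ : Fin 4 → Fin 4 → ZMod 3)
    (hℓ : ∀ i j, i ≠ j → ∃ r : ℕ,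
      ((r : ZMod 3) = ℓ i j ∧ (g j : ZMod (q j)) ^ r * (q i : ZMod (q j)) = 1)) :
    LinearIndependent (ZMod 3) fun i : Fin 4 =>
      ∑ j : Fin 4, ℓ i j •
        ⁅FreeLieAlgebra.of (ZMod 3) i, FreeLieAlgebra.of (ZMod 3) j⁆ := by
  subst hq
  -- ℓ 0 1 = 0, since 31 is a cube mod 37
  have h01 : ℓ 0 1 = 0 := by
    obtain ⟨r, hr1, hr2⟩ := hℓ 0 1 (by decide)
    rw [← hr1]
    exact (linking_keyNT 36 12 r rfl (by norm_num)
      ((g 1 : ℕ) : ZMod 37) ((31 : ℕ) : ZMod 37) (hg 1) hr2).mpr (by decide)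
  -- ℓ 1 0 ≠ 0, since 37 is not a cube mod 31
  have h10 : ℓ 1 0 ≠ 0 := by
    obtain ⟨r, hr1, hr2⟩ := hℓ 1 0 (by decide)
    rw [← hr1]
    intro h
    exact (by decide : ¬ ((37 : ℕ) : ZMod 31) ^ 10 = 1)
      ((linking_keyNT 30 10 r rfl (by norm_num)
        ((g 0 : ℕ) : ZMod 31) ((37 : ℕ) : ZMod 31) (hg 0) hr2).mp h)
  -- ℓ 2 0 ≠ 0, since 43 is not a cube mod 31
  have h20 : ℓ 2 0 ≠ 0 := by
    obtain ⟨r, hr1, hr2⟩ := hℓ 2 0 (by decide)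
    rw [← hr1]
    intro h
    exact (by decide : ¬ ((43 : ℕ) : ZMod 31) ^ 10 = 1)
      ((linking_keyNT 30 10 r rfl (by norm_num)
        ((g 0 : ℕ) : ZMod 31) ((43 : ℕ) : ZMod 31) (hg 0) hr2).mp h)
  -- ℓ 3 1 ≠ 0, since 67 is not a cube mod 37
  have h31 : ℓ 3 1 ≠ 0 := by
    obtain ⟨r, hr1, hr2⟩ := hℓ 3 1 (by decide)
    rw [← hr1]
    intro h
    exact (by decide : ¬ ((67 : ℕ) : ZMod 37) ^ 12 = 1)
      ((linking_keyNT 36 12 r rfl (by norm_num)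
        ((g 1 : ℕ) : ZMod 37) ((67 : ℕ) : ZMod 37) (hg 1) hr2).mp h)
  -- ℓ 0 3 ≠ 0, since 31 is not a cube mod 67
  have h03 : ℓ 0 3 ≠ 0 := by
    obtain ⟨r, hr1, hr2⟩ := hℓ 0 3 (by decide)
    rw [← hr1]
    intro h
    exact (by decide : ¬ ((31 : ℕ) : ZMod 67) ^ 22 = 1)
      ((linking_keyNT 66 22 r rfl (by norm_num)
        ((g 3 : ℕ) : ZMod 67) ((31 : ℕ) : ZMod 67) (hg 3) hr2).mp h)
  rw [Fintype.linearIndependent_iff]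
  intro c hc
  have e01 := linking_coeffs ℓ c hc 0 1
  have e13 := linking_coeffs ℓ c hc 1 3
  have e03 := linking_coeffs ℓ c hc 0 3
  have e02 := linking_coeffs ℓ c hc 0 2
  rw [h01] at e01
  have hc1 : c 1 = 0 := by
    have : c 1 * ℓ 1 0 = 0 := by linear_combination -e01
    rcases mul_eq_zero.mp this with h | h
    · exact h
    · exact absurd h h10
  have hc3 : c 3 = 0 := by
    rw [hc1] at e13
    have : c 3 * ℓ 3 1 = 0 := by linear_combination -e13
    rcases mul_eq_zero.mp this with h | h
    · exact h
    · exact absurd h h31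
  have hc0 : c 0 = 0 := by
    rw [hc3] at e03
    have : c 0 * ℓ 0 3 = 0 := by linear_combination e03
    rcases mul_eq_zero.mp this with h | h
    · exact h
    · exact absurd h h03
  have hc2 : c 2 = 0 := by
    rw [hc0] at e02
    have : c 2 * ℓ 2 0 = 0 := by linear_combination -e02
    rcases mul_eq_zero.mp this with h | h
    · exact h
    · exact absurd h h20
  intro i
  fin_cases i
  · exact hc0
  · exact hc1
  · exact hc2
  · exact hc3
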